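/- Correctness of split-stream execution (Theorem 1, split-stream versus standard mutation analysis): for every fuel bound n, every finite set I ⊆ M, every mutant ID i ∈ I, and every state s, ssRun n I s i = stdRun n i s; hence split-stream execution produces, for every mutant, the same final state and the same sequence of save(s, i) invocations as standard mutation analysis. -/

import Mathlib

/-- A variant at a location: a code block together with the set of mutant IDs
for which this variant is enabled. -/
structure Variant (C ID : Type) where
  code : C
  I : Finset ID
deriving DecidableEq

/-- A mutation model: a finite set `M` of all mutant IDs and a mutation procedure `p`
assigning to each location a finite set of variants, such that ID sets of distinct
variants at a location are pairwise disjoint and their union is `M`. -/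
structure MutModel (L C ID : Type) [DecidableEq C] [DecidableEq ID] where
  M : Finset ID
  p : L → Finset (Variant C ID)
  subset_M : ∀ l : L, ∀ v ∈ p l, v.I ⊆ M
  disj : ∀ l : L, ∀ v ∈ p l, ∀ w ∈ p l, v ≠ w → Disjoint v.I w.I
  cover : ∀ l : L, (p l).biUnion (fun v => v.I) = M

section Runs

variable {L C ID S : Type} [DecidableEq C] [DecidableEq ID] [DecidableEq S]

/-- The standard step of mutant `i` at state `s`: if `φ s = some l`, execute the
code of the unique variant in `p l` enabled for `i`; at a terminated state
(`φ s = none`) the state is left unchanged. -/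
noncomputable def step (m : MutModel L C ID) (φ : S → Option L) (execute : S → C → S)
    (i : ID) (s : S) : S :=
  match φ s with
  | none => s
  | some l => if h : ∃ v ∈ m.p l, i ∈ v.I then execute s h.choose.code else s

/-- The standard mutation-analysis run of mutant `i` for `n` steps. -/
noncomputable def stdRun (m : MutModel L C ID) (φ : S → Option L) (execute : S → C → S) :
    ℕ → ID → S → S
  | 0, _, s => s
  | n + 1, i, s =>
    match φ s with
    | none => s
    | some _ => stdRun m φ execute n i (step m φ execute i s)

/-- The split-stream run: the process splits into one child per enabled variant;
the child containing mutant `i` represents `I ∩ v.I` for the unique variant `v`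
at location `φ s` with `i ∈ v.I`, and its state advances by executing `v.code`. -/
noncomputable def ssRun (m : MutModel L C ID) (φ : S → Option L) (execute : S → C → S) :
    ℕ → Finset ID → S → ID → S
  | 0, _, s, _ => s
  | n + 1, I, s, i =>
    match φ s with
    | none => s
    | some l =>
      if h : ∃ v ∈ m.p l, i ∈ v.I then
        ssRun m φ execute n (I ∩ h.choose.I) (execute s h.choose.code) i
      else s

theorem MutModel.exists_variant_mem (m : MutModel L C ID) (l : L) {i : ID} (hi : i ∈ m.M) :
    ∃ v ∈ m.p l, i ∈ v.I :=
  Finset.mem_biUnion.mp (m.cover l ▸ hi)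

section SplitStream

omit [DecidableEq S]

variable {m : MutModel L C ID} {φ : S → Option L} {execute : S → C → S}

theorem step_of_mem_variant {i : ID} {s : S} {l : L} (hφ : φ s = some l)
    (h : ∃ v ∈ m.p l, i ∈ v.I) :
    step m φ execute i s = execute s h.choose.code := by
  simp only [step, hφ, dif_pos h]

theorem stdRun_succ_of_eq_some (n : ℕ) (i : ID) {s : S} {l : L} (hφ : φ s = some l) :
    stdRun m φ execute (n + 1) i s = stdRun m φ execute n i (step m φ execute i s) := by
  simp only [stdRun, hφ]

theorem ssRun_succ_of_mem_variant (n : ℕ) (I : Finset ID) {i : ID} {s : S} {l : L}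
    (hφ : φ s = some l) (h : ∃ v ∈ m.p l, i ∈ v.I) :
    ssRun m φ execute (n + 1) I s i =
      ssRun m φ execute n (I ∩ h.choose.I) (execute s h.choose.code) i := by
  simp only [ssRun, hφ, dif_pos h]

/-- `I` is mere bookkeeping: because `i ∈ M` is covered at every location, the child containing
`i` always executes the very variant that `step i` executes. -/
theorem ssRun_eq_stdRun {i : ID} (hi : i ∈ m.M) :
    ∀ (n : ℕ) (I : Finset ID) (s : S), ssRun m φ execute n I s i = stdRun m φ execute n i s
  | 0, _, _ => rfl
  | n + 1, I, s => by
    cases hφ : φ s with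
    | none => simp only [ssRun, stdRun, hφ]
    | some l =>
      have h := m.exists_variant_mem l hi
      rw [ssRun_succ_of_mem_variant n I hφ h, stdRun_succ_of_eq_some n i hφ,
        step_of_mem_variant hφ h]
      exact ssRun_eq_stdRun hi n _ _

end SplitStream

/-- Correctness of split-stream execution versus standard mutation analysis
(Theorem 1): for every fuel bound `n`, every `I ⊆ M`, every `i ∈ I` and every
state `s`, the split-stream run records for `i` exactly the state reached by the
standard run of mutant `i`. -/
theorem stmt8 (m : MutModel L C ID) (φ : S → Option L) (execute : S → C → S) :
    ∀ (n : ℕ) (I : Finset ID), I ⊆ m.M → ∀ i ∈ I, ∀ s : S,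
      ssRun m φ execute n I s i = stdRun m φ execute n i s :=
  fun n I hIM _ hi s => ssRun_eq_stdRun (hIM hi) n I s

end Runs
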